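/- For any positive integers n ≥ 1 and r_1, ..., r_n ≥ 2, the n-dimensional grid graph P_{r_1} × ⋯ × P_{r_n} (Cartesian product of paths) has edge metric dimension at most n. Specifically, the set S consisting of the all-zeros vertex together with the n-1 vertices having r_j - 1 in coordinate j (for 1 ≤ j ≤ n-1) and 0 elsewhere is an edge resolving set. -/

import Mathlib

open SimpleGraph Finset

/-- Distance from an edge (as an unordered pair) to a vertex: the minimum
of the distances from the two endpoints. -/
noncomputable def edgeVertexDist {V : Type*} (G : SimpleGraph V) (e : Sym2 V) (v : V) : ℕ :=
  Sym2.lift ⟨fun x y => min (G.dist x v) (G.dist y v), fun x y => by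
    simp [min_comm]⟩ e

/-- `S` is a resolving set for the vertices of `G`. -/
def IsResolvingSet {V : Type*} (G : SimpleGraph V) (S : Set V) : Prop :=
  ∀ u w : V, (∀ s ∈ S, G.dist u s = G.dist w s) → u = w

/-- `S` is a resolving set for the edges of `G`. -/
def IsEdgeResolvingSet {V : Type*} (G : SimpleGraph V) (S : Set V) : Prop :=
  ∀ e ∈ G.edgeSet, ∀ f ∈ G.edgeSet,
    (∀ s ∈ S, edgeVertexDist G e s = edgeVertexDist G f s) → e = f

/-- The metric dimension of `G`. -/
noncomputable def metricDim {V : Type*} (G : SimpleGraph V) : ℕ :=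
  sInf {k | ∃ S : Finset V, S.card = k ∧ IsResolvingSet G (S : Set V)}

/-- The edge metric dimension of `G`. -/
noncomputable def edgeMetricDim {V : Type*} (G : SimpleGraph V) : ℕ :=
  sInf {k | ∃ S : Finset V, S.card = k ∧ IsEdgeResolvingSet G (S : Set V)}

/-- The `n`-dimensional grid graph: vertices are integer points with
`0 ≤ x_i ≤ r_i - 1`, adjacent iff they differ by one in exactly one coordinate. -/
def gridGraph (n : ℕ) (r : Fin n → ℕ) : SimpleGraph (∀ i, Fin (r i)) where
  Adj x y := ∃ j, ((x j : ℕ) + 1 = (y j : ℕ) ∨ (y j : ℕ) + 1 = (x j : ℕ)) ∧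
    ∀ i, i ≠ j → x i = y i
  symm := by
    constructor
    rintro x y ⟨j, h, hi⟩
    exact ⟨j, h.symm, fun i hij => (hi i hij).symm⟩
  loopless := by
    constructor
    rintro x ⟨j, h, -⟩
    omega

/- The graph distance in the grid is the L1 distance. Against the origin an edge reads off the
coordinate sum `|x|` of its lower endpoint `x`; against the corner `r_j - 1` in coordinate `j` it
reads off `|x| + r_j - 1 - 2 x_j - [edge points in direction j]`, so parity recovers both `x_j`
and whether the edge points in direction `j`, for every `j < n - 1`. The last coordinate of `x`
then follows from `|x|`, and the direction `n - 1` is the only one left if no other fits. -/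

theorem Fintype.sum_add_eq_sum_add_of_forall_ne {ι M : Type*} [Fintype ι] [AddCommMonoid M]
    {f g : ι → M} (j : ι) (h : ∀ i ≠ j, f i = g i) : ∑ i, f i + g j = ∑ i, g i + f j := by
  classical
  have : ∑ i ∈ univ.erase j, f i = ∑ i ∈ univ.erase j, g i :=
    Finset.sum_congr rfl fun i hi => h i (ne_of_mem_erase hi)
  rw [← add_sum_erase _ f (mem_univ j), ← add_sum_erase _ g (mem_univ j), this]
  abel

theorem Fintype.eq_of_sum_eq_of_forall_ne {ι M : Type*} [Fintype ι] [AddCancelCommMonoid M]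
    {f g : ι → M} (j : ι) (h : ∀ i ≠ j, f i = g i) (hsum : ∑ i, f i = ∑ i, g i) : f = g := by
  funext i
  obtain rfl | hij := eq_or_ne i j
  · have := sum_add_eq_sum_add_of_forall_ne i h
    rw [hsum] at this
    exact (add_left_cancel this).symm
  · exact h i hij

theorem SimpleGraph.dist_eq_of_potential {V : Type*} {G : SimpleGraph V} {y : V} (f : V → ℕ)
    (hzero : ∀ a, f a = 0 ↔ a = y) (hadj : ∀ a b, G.Adj a b → f a ≤ f b + 1)
    (hdesc : ∀ a, 0 < f a → ∃ b, G.Adj a b ∧ f b + 1 = f a) (a : V) :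
    G.dist a y = f a := by
  have walk_of_potential : ∀ m a, f a = m → ∃ w : G.Walk a y, w.length = m := by
    intro m
    induction m with
    | zero =>
      intro a ha
      obtain rfl := (hzero a).mp ha
      exact ⟨.nil, rfl⟩
    | succ m ih =>
      intro a ha
      obtain ⟨b, hab, hb⟩ := hdesc a (by omega)
      obtain ⟨w, hw⟩ := ih b (by omega)
      exact ⟨.cons hab w, by simp [hw]⟩
  have potential_le_length : ∀ {a b} (w : G.Walk a b), f a ≤ w.length + f b := by
    intro a b w
    induction w with
    | nil => simp
    | cons hab w ih => have := hadj _ _ hab; simp only [Walk.length_cons]; omega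
  obtain ⟨w, hw⟩ := walk_of_potential _ a rfl
  obtain ⟨p, hp⟩ := Reachable.exists_walk_length_eq_dist ⟨w⟩
  have hle := hw ▸ dist_le w
  have hge := potential_le_length p
  rw [hp, (hzero y).mpr rfl] at hge
  omega

theorem edgeMetricDim_le_card {V : Type*} {G : SimpleGraph V} {S : Finset V}
    (hS : IsEdgeResolvingSet G S) : edgeMetricDim G ≤ #S :=
  Nat.sInf_le ⟨S, rfl, hS⟩

namespace gridGraph

variable {n : ℕ} {r : Fin n → ℕ}

theorem dist_eq_sum (x y : ∀ i, Fin (r i)) :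
    (gridGraph n r).dist x y = ∑ i, Nat.dist (x i) (y i) := by
  refine dist_eq_of_potential (fun a => ∑ i, Nat.dist (a i) (y i)) ?_ ?_ ?_ x
  · intro a
    simp only [sum_eq_zero_iff, mem_univ, true_implies, funext_iff, Fin.ext_iff]
    exact forall_congr' fun i => ⟨Nat.eq_of_dist_eq_zero, Nat.dist_eq_zero⟩
  · rintro a b ⟨j, hj, hoff⟩
    have := Fintype.sum_add_eq_sum_add_of_forall_ne
      (f := fun i => Nat.dist (a i) (y i)) (g := fun i => Nat.dist (b i) (y i)) j
      fun i hi => by rw [hoff i hi]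
    simp only [Nat.dist] at this ⊢
    omega
  · intro a ha
    obtain ⟨j, hj⟩ : ∃ j, (a j : ℕ) ≠ y j := by
      by_contra! h
      simp [h, Nat.dist_self] at ha
    obtain ⟨c, hstep, hc⟩ : ∃ c : Fin (r j),
        ((a j : ℕ) + 1 = c ∨ (c : ℕ) + 1 = a j) ∧ Nat.dist c (y j) + 1 = Nat.dist (a j) (y j) := by
      rcases Nat.lt_or_gt_of_ne hj with hlt | hgt
      · exact ⟨⟨a j + 1, by omega⟩, .inl rfl, by simp only [Nat.dist]; omega⟩
      · exact ⟨⟨a j - 1, by omega⟩, .inr (Nat.sub_add_cancel (by omega)), by simp only [Nat.dist]; omega⟩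
    classical
    refine ⟨Function.update a j c, ⟨j, by simpa using hstep, fun i hi => by simp [hi]⟩, ?_⟩
    have := Fintype.sum_add_eq_sum_add_of_forall_ne
      (f := fun i => Nat.dist (Function.update a j c i) (y i))
      (g := fun i => Nat.dist (a i) (y i)) j fun i hi => by simp [hi]
    simp only [Function.update_self] at this
    omega

def IsUnitStep (k : Fin n) (x y : ∀ i, Fin (r i)) : Prop :=
  (x k : ℕ) + 1 = y k ∧ ∀ i ≠ k, x i = y i

theorem IsUnitStep.right_unique {k : Fin n} {x y y' : ∀ i, Fin (r i)} (h : IsUnitStep k x y)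
    (h' : IsUnitStep k x y') : y = y' := by
  funext i
  obtain rfl | hik := eq_or_ne i k
  · exact Fin.ext (h.1.symm.trans h'.1)
  · exact (h.2 i hik).symm.trans (h'.2 i hik)

theorem IsUnitStep.sum_right {k : Fin n} {x y : ∀ i, Fin (r i)} (h : IsUnitStep k x y) :
    ∑ i, (y i : ℕ) = ∑ i, (x i : ℕ) + 1 := by
  have := Fintype.sum_add_eq_sum_add_of_forall_ne
    (f := fun i => (x i : ℕ)) (g := fun i => (y i : ℕ)) k fun i hi => by rw [h.2 i hi]
  simp only [← h.1] at this
  omega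

theorem exists_isUnitStep_of_mem_edgeSet {e : Sym2 (∀ i, Fin (r i))}
    (he : e ∈ (gridGraph n r).edgeSet) :
    ∃ x y k, e = s(x, y) ∧ IsUnitStep k x y := by
  induction e with
  | _ a b =>
    obtain ⟨k, hk | hk, hoff⟩ := he
    · exact ⟨a, b, k, rfl, hk, hoff⟩
    · exact ⟨b, a, k, Sym2.eq_swap, hk, fun i hi => (hoff i hi).symm⟩

section Landmarks

variable (hr : ∀ i, 0 < r i)

def origin : ∀ i, Fin (r i) := fun i => ⟨0, hr i⟩

def corner (j : Fin n) : ∀ i, Fin (r i) :=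
  fun i => if i = j then ⟨r i - 1, Nat.sub_lt (hr i) one_pos⟩ else ⟨0, hr i⟩

def landmarks : Set (∀ i, Fin (r i)) :=
  {origin hr} ∪ {v | ∃ j : Fin n, (j : ℕ) < n - 1 ∧ v = corner hr j}

theorem dist_origin (x : ∀ i, Fin (r i)) :
    (gridGraph n r).dist x (origin hr) = ∑ i, (x i : ℕ) := by
  simp [dist_eq_sum, origin, Nat.dist_zero_right]

theorem dist_corner_add_two_mul (x : ∀ i, Fin (r i)) (j : Fin n) :
    (gridGraph n r).dist x (corner hr j) + 2 * x j = ∑ i, (x i : ℕ) + (r j - 1) := by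
  have hsplit := Fintype.sum_add_eq_sum_add_of_forall_ne
    (f := fun i => Nat.dist (x i) (corner hr j i)) (g := fun i => Nat.dist (x i) (origin hr i)) j
    fun i hi => by simp [corner, origin, hi]
  have hcorner : (corner hr j j : ℕ) = r j - 1 := by simp [corner]
  rw [← dist_eq_sum, ← dist_eq_sum, dist_origin, hcorner, show (origin hr j : ℕ) = 0 from rfl,
    Nat.dist_zero_right] at hsplit
  have := (x j).isLt
  simp only [Nat.dist] at hsplit
  omega

theorem edgeVertexDist_origin {k : Fin n} {x y : ∀ i, Fin (r i)} (h : IsUnitStep k x y) :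
    edgeVertexDist (gridGraph n r) s(x, y) (origin hr) = ∑ i, (x i : ℕ) := by
  simp only [edgeVertexDist, Sym2.lift_mk, dist_origin, h.sum_right]
  omega

theorem edgeVertexDist_corner {k : Fin n} {x y : ∀ i, Fin (r i)} (h : IsUnitStep k x y)
    (j : Fin n) :
    edgeVertexDist (gridGraph n r) s(x, y) (corner hr j) + 2 * x j + (if j = k then 1 else 0) =
      ∑ i, (x i : ℕ) + (r j - 1) := by
  have hx := dist_corner_add_two_mul hr x j
  have hy := dist_corner_add_two_mul hr y j
  rw [h.sum_right] at hy
  simp only [edgeVertexDist, Sym2.lift_mk]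
  split_ifs with hjk
  · subst hjk; have := h.1; omega
  · rw [← h.2 j hjk] at hy; omega

theorem isEdgeResolvingSet_landmarks : IsEdgeResolvingSet (gridGraph n r) (landmarks hr) := by
  intro e he f hf hd
  obtain ⟨x, y, k, rfl, hxy⟩ := exists_isUnitStep_of_mem_edgeSet he
  obtain ⟨u, w, k', rfl, huw⟩ := exists_isUnitStep_of_mem_edgeSet hf
  have hsum : ∑ i, (x i : ℕ) = ∑ i, (u i : ℕ) := by
    simpa [edgeVertexDist_origin hr hxy, edgeVertexDist_origin hr huw] using
      hd _ (Set.mem_union_left _ rfl)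
  have hcorner : ∀ j : Fin n, (j : ℕ) < n - 1 → (x j : ℕ) = u j ∧ (j = k ↔ j = k') := by
    intro j hj
    have := hd _ (Set.mem_union_right _ ⟨j, hj, rfl⟩)
    have hx := edgeVertexDist_corner hr hxy j
    have hu := edgeVertexDist_corner hr huw j
    split_ifs at hx with hjk <;> split_ifs at hu with hjk'
    · exact ⟨by omega, iff_of_true hjk hjk'⟩
    · omega
    · omega
    · exact ⟨by omega, iff_of_false hjk hjk'⟩
  have hxu : x = u := by
    have hoff : ∀ i : Fin n, i ≠ ⟨n - 1, by have := k.isLt; omega⟩ → (x i : ℕ) = u i := fun i hi =>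
      (hcorner i (by have := i.isLt; have : (i : ℕ) ≠ n - 1 := fun h => hi (Fin.ext h); omega)).1
    funext i
    exact Fin.ext (congrFun (Fintype.eq_of_sum_eq_of_forall_ne _ hoff hsum) i)
  have hkk' : k = k' := by
    by_cases hk : (k : ℕ) < n - 1
    · exact (hcorner k hk).2.mp rfl
    by_cases hk' : (k' : ℕ) < n - 1
    · exact ((hcorner k' hk').2.mpr rfl).symm
    exact Fin.ext (by omega)
  subst hxu hkk'
  rw [hxy.right_unique huw]

def landmarkFinset : Finset (∀ i, Fin (r i)) :=
  insert (origin hr) (({j | (j : ℕ) < n - 1} : Finset (Fin n)).image (corner hr))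

theorem coe_landmarkFinset : (landmarkFinset hr : Set (∀ i, Fin (r i))) = landmarks hr := by
  ext v
  simp [landmarkFinset, landmarks, eq_comm]

theorem card_landmarkFinset_le (hn : 1 ≤ n) : #(landmarkFinset hr) ≤ n :=
  calc #(landmarkFinset hr) ≤ #(({j | (j : ℕ) < n - 1} : Finset (Fin n)).image (corner hr)) + 1 :=
        card_insert_le _ _
    _ ≤ #({j | (j : ℕ) < n - 1} : Finset (Fin n)) + 1 := by gcongr; exact card_image_le
    _ = n := by rw [Fin.card_filter_val_lt]; omega

end Landmarks

end gridGraph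

/-- The grid graph `P_{r_1} × ⋯ × P_{r_n}` has edge metric dimension at most `n`;
specifically, the all-zeros vertex together with the `n-1` vertices with
`r_j - 1` in coordinate `j < n-1` and `0` elsewhere form an edge resolving set. -/
theorem stmt_16 (n : ℕ) (hn : 1 ≤ n) (r : Fin n → ℕ) (hr : ∀ i, 2 ≤ r i) :
    edgeMetricDim (gridGraph n r) ≤ n ∧
    IsEdgeResolvingSet (gridGraph n r)
      (({fun i => ⟨0, by have := hr i; omega⟩} ∪
        {v | ∃ j : Fin n, (j : ℕ) < n - 1 ∧
          v = fun i => if i = j then (⟨r i - 1, by have := hr i; omega⟩ : Fin (r i))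
            else ⟨0, by have := hr i; omega⟩}) : Set (∀ i, Fin (r i))) := by
  have hr' : ∀ i, 0 < r i := fun i => by have := hr i; omega
  have hres := gridGraph.isEdgeResolvingSet_landmarks hr'
  refine ⟨?_, hres⟩
  rw [← gridGraph.coe_landmarkFinset] at hres
  exact (edgeMetricDim_le_card hres).trans (gridGraph.card_landmarkFinset_le hr' hn)
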